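/- arXiv:2402.03449 — 3 statements merged into one kernel-verified Lean document; each statement's English description precedes it below -/
import Mathlib

section
/- Consider a coordinated attack targeting a spoofed position p_s ≠ p_c. Let Cons be a predicate on admissible subsets (the internal consistency test), and let B_s ⊆ B with |B_s| ≤ N_min − 1 be the set of benign satellites consistent with p_s. Assume: (i) every admissible T ⊆ B satisfies Cons(T) and loc(T) = p_c; (ii) every admissible T with T ∩ A ≠ ∅ satisfying Cons(T) has loc(T) = p_s and T ∩ B ⊆ B_s. If Σ_{i=N_min}^{N_sat−N_adv} C(N_sat−N_adv, i) > Σ_{i=1}^{N_adv} C(N_adv, i) · Σ_{j=max(0, N_min−i)}^{N_min−1} C(N_min−1, j), then p_c is the strict plurality vote among consistent admissible subsets: for every position q ≠ p_c, the number of admissible subsets T with Cons(T) and loc(T) = p_c strictly exceeds the number of admissible subsets T with Cons(T) and loc(T) = q; hence p_c can be recovered. -/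
open Finset

lemma aux_count_ge {ι : Type*} [DecidableEq ι] (F : Finset ι) (c : ℕ) :
    (F.powerset.filter (fun T => c ≤ T.card)).card
      = ∑ i ∈ Icc c F.card, (F.card).choose i := by
  have h : F.powerset.filter (fun T => c ≤ T.card)
      = (Icc c F.card).biUnion (fun i => F.powersetCard i) := by
    ext T
    simp only [mem_filter, mem_powerset, mem_biUnion, mem_Icc, mem_powersetCard]
    constructor
    · rintro ⟨hT, hc⟩
      exact ⟨T.card, ⟨hc, card_le_card hT⟩, hT, rfl⟩
    · rintro ⟨i, ⟨hci, _⟩, hT, rfl⟩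
      exact ⟨hT, hci⟩
  rw [h, card_biUnion]
  · exact Finset.sum_congr rfl fun i _ => by rw [card_powersetCard]
  · intro x _ y _ hxy
    simp only [disjoint_left, mem_powersetCard]
    rintro T ⟨_, rfl⟩ ⟨_, h2⟩
    exact hxy h2

/-- Under a coordinated attack targeting a spoofed position `p_s ≠ p_c`,
if the number of all-benign admissible subsets exceeds the combinatorial bound on the
number of consistent adversarial subsets, then `p_c` is the strict plurality vote
among consistent admissible subsets. -/
theorem coordinated_attack_recovery
    {ι P : Type*} [DecidableEq ι] [DecidableEq P]
    (S B : Finset ι) (hBS : B ⊆ S)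
    (Nmin : ℕ) (hNmin : 1 ≤ Nmin)
    (loc : Finset ι → P) (p_c p_s : P) (hps : p_s ≠ p_c)
    (Cons : Finset ι → Prop) [DecidablePred Cons]
    (Bs : Finset ι) (hBsB : Bs ⊆ B) (hBs : Bs.card ≤ Nmin - 1)
    -- (i) every admissible all-benign subset is consistent and yields p_c
    (hbenign : ∀ T : Finset ι, T ⊆ B → Nmin ≤ T.card → Cons T ∧ loc T = p_c)
    -- (ii) every consistent admissible subset meeting A = S \ B yields p_s,
    -- and its benign part lies in B_s
    (hattack : ∀ T : Finset ι, T ⊆ S → Nmin ≤ T.card → (T ∩ (S \ B)).Nonempty →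
      Cons T → loc T = p_s ∧ T ∩ B ⊆ Bs)
    -- combinatorial condition:
    -- Σ_{i=N_min}^{N_sat−N_adv} C(N_sat−N_adv, i)
    --   > Σ_{i=1}^{N_adv} C(N_adv, i) · Σ_{j=max(0,N_min−i)}^{N_min−1} C(N_min−1, j)
    (hcount :
      (∑ i ∈ Icc Nmin (S.card - (S \ B).card), Nat.choose (S.card - (S \ B).card) i) >
      (∑ i ∈ Icc 1 ((S \ B).card), Nat.choose ((S \ B).card) i *
        ∑ j ∈ Icc (Nmin - i) (Nmin - 1), Nat.choose (Nmin - 1) j)) :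
    -- strict plurality vote among consistent admissible subsets
    ∀ q : P, q ≠ p_c →
      (S.powerset.filter (fun T => Nmin ≤ T.card ∧ Cons T ∧ loc T = q)).card <
      (S.powerset.filter (fun T => Nmin ≤ T.card ∧ Cons T ∧ loc T = p_c)).card := by
  intro q hq
  have hBcard : S.card - (S \ B).card = B.card := by
    rw [card_sdiff_of_subset hBS, Nat.sub_sub_self (card_le_card hBS)]
  have decomp : ∀ T : Finset ι, T ⊆ S → T = (T ∩ (S \ B)) ∪ (T ∩ B) := by
    intro T hTS
    rw [← inter_union_distrib_left, sdiff_union_of_subset hBS, inter_eq_left.2 hTS]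
  -- lower bound on p_c count
  have hlow : (∑ i ∈ Icc Nmin (S.card - (S \ B).card),
      Nat.choose (S.card - (S \ B).card) i)
      ≤ (S.powerset.filter (fun T => Nmin ≤ T.card ∧ Cons T ∧ loc T = p_c)).card := by
    rw [hBcard, ← aux_count_ge B Nmin]
    apply card_le_card
    intro T hT
    simp only [mem_filter, mem_powerset] at hT ⊢
    obtain ⟨hTB, hTc⟩ := hT
    obtain ⟨hc, hl⟩ := hbenign T hTB hTc
    exact ⟨hTB.trans hBS, hTc, hc, hl⟩
  -- the pair set
  set E := (Icc 1 ((S \ B).card)).biUnion (fun i =>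
    ((S \ B).powersetCard i) ×ˢ (Bs.powerset.filter (fun Y => Nmin - i ≤ Y.card)))
    with hE
  have hDE : (S.powerset.filter (fun T => Nmin ≤ T.card ∧ Cons T ∧ loc T = q)).card
      ≤ E.card := by
    apply card_le_card_of_injOn (fun T => (T ∩ (S \ B), T ∩ B))
    · intro T hT
      simp only [mem_coe, mem_filter, mem_powerset] at hT
      obtain ⟨hTS, hTc, hCons, hloc⟩ := hT
      have hXne : (T ∩ (S \ B)).Nonempty := by
        by_contra hne
        rw [not_nonempty_iff_eq_empty] at hne
        have hTB : T ⊆ B := by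
          intro x hx
          by_contra hxB
          have hm : x ∈ T ∩ (S \ B) :=
            mem_inter.2 ⟨hx, mem_sdiff.2 ⟨hTS hx, hxB⟩⟩
          simp [hne] at hm
        obtain ⟨_, hl⟩ := hbenign T hTB hTc
        exact hq (hloc ▸ hl)
      obtain ⟨_, hYBs⟩ := hattack T hTS hTc hXne hCons
      have hdec := decomp T hTS
      have hcardle : T.card ≤ (T ∩ (S \ B)).card + (T ∩ B).card := by
        calc T.card = ((T ∩ (S \ B)) ∪ (T ∩ B)).card := by rw [← hdec]
          _ ≤ _ := card_union_le _ _
      simp only [hE, mem_coe, mem_biUnion, mem_Icc, mem_product, mem_powersetCard,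
        mem_filter, mem_powerset]
      refine ⟨(T ∩ (S \ B)).card, ⟨hXne.card_pos, card_le_card inter_subset_right⟩,
        ⟨inter_subset_right, rfl⟩, hYBs, ?_⟩
      omega
    · intro T1 h1 T2 h2 heq
      simp only [mem_coe, mem_filter, mem_powerset] at h1 h2
      have e1 : T1 ∩ (S \ B) = T2 ∩ (S \ B) := congrArg Prod.fst heq
      have e2 : T1 ∩ B = T2 ∩ B := congrArg Prod.snd heq
      rw [decomp T1 h1.1, decomp T2 h2.1, e1, e2]
  have hEcard : E.card ≤ ∑ i ∈ Icc 1 ((S \ B).card),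
      Nat.choose ((S \ B).card) i *
        ∑ j ∈ Icc (Nmin - i) (Nmin - 1), Nat.choose (Nmin - 1) j := by
    refine card_biUnion_le.trans ?_
    apply Finset.sum_le_sum
    intro i _
    rw [card_product, card_powersetCard, aux_count_ge]
    apply Nat.mul_le_mul_left
    calc ∑ j ∈ Icc (Nmin - i) Bs.card, (Bs.card).choose j
        ≤ ∑ j ∈ Icc (Nmin - i) Bs.card, (Nmin - 1).choose j :=
          Finset.sum_le_sum fun j _ => Nat.choose_le_choose j hBs
      _ ≤ ∑ j ∈ Icc (Nmin - i) (Nmin - 1), (Nmin - 1).choose j :=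
          Finset.sum_le_sum_of_subset (Icc_subset_Icc_right hBs)
  exact lt_of_le_of_lt (hDE.trans hEcard) (lt_of_lt_of_le hcount hlow)
end

section
/- Consider M infrastructures with pairwise disjoint anchor sets S_1, …, S_M, benign anchors B_m ⊆ S_m, adversarial anchors A_m = S_m \ B_m with N_anc^m = |S_m| and N_adv^m = |A_m|, and per-infrastructure minimum N_min^m ≥ 1. Assume for every m: (benign consistency) loc_m(T) = p_c for every m-admissible T ⊆ B_m, and (uncoordinated attack) loc_m(T) ≠ p_c for every m-admissible T with T ∩ A_m ≠ ∅, where moreover the positions loc_m(T) over all pairs (m, T) with T m-admissible and T ∩ A_m ≠ ∅ are pairwise distinct. If there exists some m with N_anc^m − N_adv^m > N_min^m, then p_c can be recovered by a plurality vote over all pairs (m, T): the number of pairs (m, T) with T m-admissible and loc_m(T) = p_c is at least 2, while for every q ≠ p_c the number of pairs (m, T) with loc_m(T) = q is at most 1; hence p_c is the unique position attained by at least two pairs. -/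
open Finset

/-- Theorem 1, multi-infrastructure, uncoordinated attack:
with pairwise disjoint anchor sets, per-infrastructure benign consistency and
attack inconsistency, pairwise-distinct adversarial positions, and at least one
infrastructure with strictly more benign anchors than its minimum, the true
position `p_c` is recovered by plurality vote over all pairs `(m, T)`. -/
theorem multi_infrastructure_uncoordinated_recovery
    {ι P : Type*} [DecidableEq ι] [DecidableEq P]
    (M : ℕ)
    (S B : Fin M → Finset ι) (hBS : ∀ m, B m ⊆ S m)
    (hdisj : ∀ m₁ m₂, m₁ ≠ m₂ → Disjoint (S m₁) (S m₂))
    (Nmin : Fin M → ℕ) (hNmin : ∀ m, 1 ≤ Nmin m)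
    (loc : Fin M → Finset ι → P) (p_c : P)
    -- benign consistency for every infrastructure
    (hbenign : ∀ m, ∀ T : Finset ι, T ⊆ B m → Nmin m ≤ T.card → loc m T = p_c)
    -- uncoordinated attack: admissible subsets meeting A_m = S_m \ B_m miss p_c
    (hattack : ∀ m, ∀ T : Finset ι, T ⊆ S m → Nmin m ≤ T.card →
      (T ∩ (S m \ B m)).Nonempty → loc m T ≠ p_c)
    -- positions of adversarial admissible subsets are pairwise distinct
    (hinj : ∀ m₁ m₂, ∀ T₁ T₂ : Finset ι,
      T₁ ⊆ S m₁ → Nmin m₁ ≤ T₁.card → (T₁ ∩ (S m₁ \ B m₁)).Nonempty →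
      T₂ ⊆ S m₂ → Nmin m₂ ≤ T₂.card → (T₂ ∩ (S m₂ \ B m₂)).Nonempty →
      loc m₁ T₁ = loc m₂ T₂ → m₁ = m₂ ∧ T₁ = T₂)
    -- ∃ m, N_anc^m − N_adv^m > N_min^m, i.e. |B_m| > N_min^m
    (hex : ∃ m, Nmin m + 1 ≤ (B m).card) :
    -- plurality vote over all pairs (m, T)
    2 ≤ ∑ m, ((S m).powerset.filter
          (fun T => Nmin m ≤ T.card ∧ loc m T = p_c)).card ∧
    (∀ q : P, q ≠ p_c →
      (∑ m, ((S m).powerset.filter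
          (fun T => Nmin m ≤ T.card ∧ loc m T = q)).card) ≤ 1) ∧
    (∀ q : P,
      2 ≤ (∑ m, ((S m).powerset.filter
          (fun T => Nmin m ≤ T.card ∧ loc m T = q)).card) → q = p_c) := by
  have key1 : 2 ≤ ∑ m, ((S m).powerset.filter
      (fun T => Nmin m ≤ T.card ∧ loc m T = p_c)).card := by
    obtain ⟨m0, hm0⟩ := hex
    obtain ⟨T1, hT1B, hT1c⟩ :=
      Finset.exists_subset_card_eq (le_trans (Nat.le_succ _) hm0)
    obtain ⟨T2, hT2B, hT2c⟩ := Finset.exists_subset_card_eq hm0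
    have hne : T1 ≠ T2 := by
      intro h; rw [h, hT2c] at hT1c; omega
    have hmem : ∀ T : Finset ι, T ⊆ B m0 → Nmin m0 ≤ T.card →
        T ∈ (S m0).powerset.filter
          (fun T => Nmin m0 ≤ T.card ∧ loc m0 T = p_c) := by
      intro T hTB hTc
      simp only [Finset.mem_filter, Finset.mem_powerset]
      exact ⟨hTB.trans (hBS m0), hTc, hbenign m0 T hTB hTc⟩
    have hsub : ({T1, T2} : Finset (Finset ι)) ⊆ (S m0).powerset.filter
        (fun T => Nmin m0 ≤ T.card ∧ loc m0 T = p_c) := by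
      intro T hT
      rcases Finset.mem_insert.mp hT with h | h
      · exact h ▸ hmem T1 hT1B hT1c.ge
      · exact (Finset.mem_singleton.mp h) ▸ hmem T2 hT2B (by omega)
    have h2 : 2 ≤ ((S m0).powerset.filter
        (fun T => Nmin m0 ≤ T.card ∧ loc m0 T = p_c)).card := by
      calc 2 = ({T1, T2} : Finset (Finset ι)).card := by
              rw [Finset.card_insert_of_notMem (by simpa using hne),
                Finset.card_singleton]
           _ ≤ _ := Finset.card_le_card hsub
    exact le_trans h2 (Finset.single_le_sum
      (f := fun m => ((S m).powerset.filter
        (fun T => Nmin m ≤ T.card ∧ loc m T = p_c)).card)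
      (fun m _ => Nat.zero_le _) (Finset.mem_univ m0))
  have key2 : ∀ q : P, q ≠ p_c →
      (∑ m, ((S m).powerset.filter
          (fun T => Nmin m ≤ T.card ∧ loc m T = q)).card) ≤ 1 := by
    intro q hq
    rw [← Finset.card_sigma]
    apply Finset.card_le_one.mpr
    rintro ⟨m₁, T₁⟩ h₁ ⟨m₂, T₂⟩ h₂
    simp only [Finset.mem_sigma, Finset.mem_filter, Finset.mem_powerset] at h₁ h₂
    obtain ⟨-, hT₁S, hT₁c, hT₁loc⟩ := h₁
    obtain ⟨-, hT₂S, hT₂c, hT₂loc⟩ := h₂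
    have hA : ∀ m (T : Finset ι), T ⊆ S m → Nmin m ≤ T.card → loc m T = q →
        (T ∩ (S m \ B m)).Nonempty := by
      intro m T hTS hTc hloc
      by_contra hne
      rw [Finset.not_nonempty_iff_eq_empty] at hne
      have hTB : T ⊆ B m := by
        intro x hx
        by_contra hxB
        have : x ∈ T ∩ (S m \ B m) :=
          Finset.mem_inter.mpr ⟨hx, Finset.mem_sdiff.mpr ⟨hTS hx, hxB⟩⟩
        simp [hne] at this
      exact hq ((hbenign m T hTB hTc) ▸ hloc.symm)
    obtain ⟨hm, hT⟩ := hinj m₁ m₂ T₁ T₂ hT₁S hT₁c (hA m₁ T₁ hT₁S hT₁c hT₁loc)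
      hT₂S hT₂c (hA m₂ T₂ hT₂S hT₂c hT₂loc) (hT₁loc.trans hT₂loc.symm)
    subst hm; subst hT; rfl
  refine ⟨key1, key2, fun q h2 => ?_⟩
  by_contra hq
  exact absurd h2 (by simpa using Nat.lt_succ_of_le (key2 q hq))
end

section
/- Consider a coordinated attack across M infrastructures targeting a spoofed position p_s ≠ p_c. For each m, let Cons_m be a predicate on m-admissible subsets (the internal consistency test) and let B_s^m ⊆ B_m with |B_s^m| ≤ N_min^m − 1 be the benign anchors of infrastructure m consistent with p_s. Assume for every m: (i) every m-admissible T ⊆ B_m satisfies Cons_m(T) and loc_m(T) = p_c; (ii) every m-admissible T with T ∩ A_m ≠ ∅ satisfying Cons_m(T) has loc_m(T) = p_s and T ∩ B_m ⊆ B_s^m. If Σ_{m=1}^{M} Σ_{i=N_min^m}^{N_anc^m−N_adv^m} C(N_anc^m−N_adv^m, i) > Σ_{m=1}^{M} Σ_{i=1}^{N_adv^m} C(N_adv^m, i) · Σ_{j=max(0, N_min^m−i)}^{N_min^m−1} C(N_min^m−1, j), then p_c is the strict plurality vote among all consistent admissible subsets across infrastructures: for every q ≠ p_c, the total number of pairs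 (m, T) with T m-admissible, Cons_m(T), and loc_m(T) = p_c strictly exceeds the total number of pairs (m, T) with Cons_m(T) and loc_m(T) = q; hence p_c can be recovered. -/
open Finset

lemma card_filter_card_ge {ι : Type*} [DecidableEq ι] (s : Finset ι) (k : ℕ) :
    ((s.powerset).filter (fun T => k ≤ T.card)).card
      = ∑ j ∈ Icc k s.card, Nat.choose s.card j := by
  have h : (s.powerset).filter (fun T => k ≤ T.card)
      = (Icc k s.card).biUnion (fun j => s.powersetCard j) := by
    ext T
    simp only [mem_filter, mem_powerset, mem_biUnion, mem_Icc, mem_powersetCard]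
    constructor
    · rintro ⟨hTs, hk⟩
      exact ⟨T.card, ⟨hk, card_le_card hTs⟩, hTs, rfl⟩
    · rintro ⟨j, ⟨hj1, _⟩, hTs, rfl⟩
      exact ⟨hTs, hj1⟩
  rw [h, card_biUnion]
  · exact Finset.sum_congr rfl fun j _ => by rw [card_powersetCard]
  · intro x _ y _ hxy
    rw [Function.onFun, disjoint_left]
    intro T hx hy
    exact hxy ((mem_powersetCard.1 hx).2.symm.trans (mem_powersetCard.1 hy).2)

/-- Theorem 2, multi-infrastructure, coordinated attack:
if across the `M` infrastructures the total count of all-benign admissible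
subsets exceeds the combinatorial bound on the number of consistent adversarial
subsets, then `p_c` is the strict plurality vote among all consistent admissible
subsets across infrastructures. -/
theorem multi_infrastructure_coordinated_recovery
    {ι P : Type*} [DecidableEq ι] [DecidableEq P]
    (M : ℕ)
    (S B : Fin M → Finset ι) (hBS : ∀ m, B m ⊆ S m)
    (hdisj : ∀ m₁ m₂, m₁ ≠ m₂ → Disjoint (S m₁) (S m₂))
    (Nmin : Fin M → ℕ) (hNmin : ∀ m, 1 ≤ Nmin m)
    (loc : Fin M → Finset ι → P) (p_c p_s : P) (hps : p_s ≠ p_c)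
    (Cons : Fin M → Finset ι → Prop) [∀ m, DecidablePred (Cons m)]
    (Bs : Fin M → Finset ι) (hBsB : ∀ m, Bs m ⊆ B m)
    (hBs : ∀ m, (Bs m).card ≤ Nmin m - 1)
    -- (i) every admissible all-benign subset is consistent and yields p_c
    (hbenign : ∀ m, ∀ T : Finset ι, T ⊆ B m → Nmin m ≤ T.card →
      Cons m T ∧ loc m T = p_c)
    -- (ii) every consistent admissible subset meeting A_m yields p_s,
    -- and its benign part lies in B_s^m
    (hattack : ∀ m, ∀ T : Finset ι, T ⊆ S m → Nmin m ≤ T.card →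
      (T ∩ (S m \ B m)).Nonempty → Cons m T →
      loc m T = p_s ∧ T ∩ B m ⊆ Bs m)
    -- combinatorial condition:
    -- Σ_m Σ_{i=N_min^m}^{N_anc^m−N_adv^m} C(N_anc^m−N_adv^m, i)
    --  > Σ_m Σ_{i=1}^{N_adv^m} C(N_adv^m, i)·Σ_{j=max(0,N_min^m−i)}^{N_min^m−1} C(N_min^m−1, j)
    (hcount :
      (∑ m, ∑ i ∈ Icc (Nmin m) ((S m).card - (S m \ B m).card),
        Nat.choose ((S m).card - (S m \ B m).card) i) >
      (∑ m, ∑ i ∈ Icc 1 ((S m \ B m).card),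
        Nat.choose ((S m \ B m).card) i *
          ∑ j ∈ Icc (Nmin m - i) (Nmin m - 1), Nat.choose (Nmin m - 1) j)) :
    -- strict plurality vote among consistent admissible subsets across infrastructures
    ∀ q : P, q ≠ p_c →
      (∑ m, ((S m).powerset.filter
          (fun T => Nmin m ≤ T.card ∧ Cons m T ∧ loc m T = q)).card) <
      (∑ m, ((S m).powerset.filter
          (fun T => Nmin m ≤ T.card ∧ Cons m T ∧ loc m T = p_c)).card) := by
  intro q hq
  -- lower bound on p_c counts
  have hlow : ∀ m,
      (∑ i ∈ Icc (Nmin m) ((S m).card - (S m \ B m).card),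
        Nat.choose ((S m).card - (S m \ B m).card) i)
      ≤ ((S m).powerset.filter
          (fun T => Nmin m ≤ T.card ∧ Cons m T ∧ loc m T = p_c)).card := by
    intro m
    have hBcard : (S m).card - (S m \ B m).card = (B m).card := by
      rw [card_sdiff_of_subset (hBS m), Nat.sub_sub_self (card_le_card (hBS m))]
    rw [hBcard, ← card_filter_card_ge]
    apply card_le_card
    intro T hT
    simp only [mem_filter, mem_powerset] at hT ⊢
    obtain ⟨hTB, hcard⟩ := hT
    obtain ⟨hc, hl⟩ := hbenign m T hTB hcard
    exact ⟨hTB.trans (hBS m), hcard, hc, hl⟩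
  -- upper bound on q counts
  have hup : ∀ m,
      ((S m).powerset.filter
          (fun T => Nmin m ≤ T.card ∧ Cons m T ∧ loc m T = q)).card
      ≤ ∑ i ∈ Icc 1 ((S m \ B m).card),
          Nat.choose ((S m \ B m).card) i *
            ∑ j ∈ Icc (Nmin m - i) (Nmin m - 1), Nat.choose (Nmin m - 1) j := by
    intro m
    set A := S m \ B m with hA
    have hABdisj : Disjoint A (B m) := sdiff_disjoint
    have hAB : A ∪ B m = S m := sdiff_union_of_subset (hBS m)
    -- step 1: injection into pairs
    have hinj : ((S m).powerset.filter
          (fun T => Nmin m ≤ T.card ∧ Cons m T ∧ loc m T = q)).card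
        ≤ (((A.powerset.filter (fun a => a.Nonempty)) ×ˢ (Bs m).powerset).filter
            (fun p => Nmin m ≤ p.1.card + p.2.card)).card := by
      apply card_le_card_of_injOn (fun T => (T ∩ A, T ∩ B m))
      · intro T hT
        simp only [mem_coe, mem_filter, mem_powerset] at hT
        obtain ⟨hTS, hcard, hc, hl⟩ := hT
        have hdecomp : (T ∩ A) ∪ (T ∩ B m) = T := by
          rw [← inter_union_distrib_left, hAB, inter_eq_left.2 hTS]
        have hne : (T ∩ A).Nonempty := by
          by_contra hcon
          rw [not_nonempty_iff_eq_empty] at hcon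
          have hTB : T ⊆ B m := by
            rw [← hdecomp, hcon, empty_union]; exact inter_subset_right
          exact hq (hl ▸ (hbenign m T hTB hcard).2)
        obtain ⟨_, hsub⟩ := hattack m T hTS hcard hne hc
        simp only [mem_coe, mem_filter, mem_product, mem_powerset]
        refine ⟨⟨⟨inter_subset_right, hne⟩, hsub⟩, ?_⟩
        calc Nmin m ≤ T.card := hcard
          _ = ((T ∩ A) ∪ (T ∩ B m)).card := by rw [hdecomp]
          _ ≤ (T ∩ A).card + (T ∩ B m).card := card_union_le _ _
      · intro T1 h1 T2 h2 heq
        simp only [mem_coe, mem_filter, mem_powerset] at h1 h2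
        have e1 : (T1 ∩ A) ∪ (T1 ∩ B m) = T1 := by
          rw [← inter_union_distrib_left, hAB, inter_eq_left.2 h1.1]
        have e2 : (T2 ∩ A) ∪ (T2 ∩ B m) = T2 := by
          rw [← inter_union_distrib_left, hAB, inter_eq_left.2 h2.1]
        have h12 : T1 ∩ A = T2 ∩ A ∧ T1 ∩ B m = T2 ∩ B m := Prod.mk.injEq .. ▸ heq
        rw [← e1, ← e2, h12.1, h12.2]
    refine hinj.trans ?_
    -- step 2: bound the pair set
    have hsubset : (((A.powerset.filter (fun a => a.Nonempty)) ×ˢ (Bs m).powerset).filter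
            (fun p => Nmin m ≤ p.1.card + p.2.card))
        ⊆ (Icc 1 A.card).biUnion (fun i =>
            (A.powersetCard i) ×ˢ ((Bs m).powerset.filter
              (fun b => Nmin m - i ≤ b.card))) := by
      intro p hp
      simp only [mem_filter, mem_product, mem_powerset] at hp
      obtain ⟨⟨⟨haA, hane⟩, hbBs⟩, hsum⟩ := hp
      simp only [mem_biUnion, mem_Icc, mem_product, mem_powersetCard, mem_filter,
        mem_powerset]
      exact ⟨p.1.card, ⟨card_pos.2 hane, card_le_card haA⟩,
        ⟨haA, rfl⟩, hbBs, Nat.sub_le_iff_le_add.2 (by omega)⟩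
    refine (card_le_card hsubset).trans ((card_biUnion_le).trans ?_)
    apply Finset.sum_le_sum
    intro i _
    rw [card_product, card_powersetCard]
    apply Nat.mul_le_mul_left
    rw [card_filter_card_ge]
    calc ∑ j ∈ Icc (Nmin m - i) (Bs m).card, Nat.choose (Bs m).card j
        ≤ ∑ j ∈ Icc (Nmin m - i) (Bs m).card, Nat.choose (Nmin m - 1) j :=
          Finset.sum_le_sum fun j _ => Nat.choose_le_choose j (hBs m)
      _ ≤ ∑ j ∈ Icc (Nmin m - i) (Nmin m - 1), Nat.choose (Nmin m - 1) j :=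
          Finset.sum_le_sum_of_subset (Icc_subset_Icc_right (hBs m))
  calc (∑ m, ((S m).powerset.filter
          (fun T => Nmin m ≤ T.card ∧ Cons m T ∧ loc m T = q)).card)
      ≤ ∑ m, ∑ i ∈ Icc 1 ((S m \ B m).card),
          Nat.choose ((S m \ B m).card) i *
            ∑ j ∈ Icc (Nmin m - i) (Nmin m - 1), Nat.choose (Nmin m - 1) j :=
        Finset.sum_le_sum fun m _ => hup m
    _ < ∑ m, ∑ i ∈ Icc (Nmin m) ((S m).card - (S m \ B m).card),
          Nat.choose ((S m).card - (S m \ B m).card) i := hcount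
    _ ≤ ∑ m, ((S m).powerset.filter
          (fun T => Nmin m ≤ T.card ∧ Cons m T ∧ loc m T = p_c)).card :=
        Finset.sum_le_sum fun m _ => hlow m
end
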